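/- The DKW method yields effective bounds on entropic risk: let X be a nonnegative real-valued random variable, γ > 0, δ ∈ (0,1), ε > 0, and let X_1, X_2, … be i.i.d. copies of X. For k samples let F̂_k be the empirical cdf, Δ_k = √(ln(2/δ)/(2k)), F̲_k(x) = min(F̂_k(x) + Δ_k, 1), and F̄_k(x) = max(F̂_k(x) − Δ_k, 0). Define, for a nondecreasing G : [0,∞) → [0,1], E_γ(G) = −(1/γ) log(γ ∫_0^∞ e^{−γx} G(x) dx). Then there exists k₀ such that for all k ≥ k₀, with probability at least 1 − δ: E_γ(F̲_k) ≤ ERisk_γ(X) ≤ E_γ(F̄_k) and E_γ(F̄_k) − E_γ(F̲_k) ≤ ε. -/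

import Mathlib

open MeasureTheory ProbabilityTheory

/-- The empirical cdf of the first `k` samples `Xs 0, …, Xs (k-1)` at outcome `ω`:
`F̂_k(x) = (1/k) |{i < k : Xs i ω ≤ x}|`. -/
noncomputable def empiricalCdf {Ω : Type*} (Xs : ℕ → Ω → ℝ) (k : ℕ) (ω : Ω) (x : ℝ) : ℝ :=
  (((Finset.range k).filter fun i => Xs i ω ≤ x).card : ℝ) / k

/-- The DKW half-width `Δ_k = √(ln(2/δ)/(2k))`. -/
noncomputable def dkwDelta (δ : ℝ) (k : ℕ) : ℝ :=
  Real.sqrt (Real.log (2 / δ) / (2 * k))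

/-- The entropic risk of a (band) function `G : ℝ → [0,1]`:
`E_γ(G) = -(1/γ) log (γ ∫_0^∞ e^{-γx} G(x) dx)`. -/
noncomputable def entropicRiskOfCdf (γ : ℝ) (G : ℝ → ℝ) : ℝ :=
  -(1 / γ) * Real.log (γ * ∫ x in Set.Ioi (0 : ℝ), Real.exp (-γ * x) * G x)

/-- The entropic risk `ERisk_γ(X) = -(1/γ) log E[e^{-γX}]` of a random variable `X`. -/
noncomputable def entropicRisk {Ω : Type*} [MeasurableSpace Ω] (μ : Measure Ω)
    (γ : ℝ) (X : Ω → ℝ) : ℝ :=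
  -(1 / γ) * Real.log (∫ ω, Real.exp (-γ * X ω) ∂μ)

/-!
Let `ν` be the exponential law of rate `γ`. Then `γ ∫₀^∞ e^{-γx} G(x) dx = ∫ G dν`; for the
empirical cdf this is the sample mean `S_k` of `Y_i = e^{-γ X_i}`, and `ERisk_γ(X) = -(1/γ) log m`
with `m = E[Y]`. Raising `F̂_k` to `min (F̂_k + Δ_k) 1` gains `Δ_k` on `(-∞, a]` as long as
`F̂_k(a) + Δ_k ≤ 1`, so that band integrates to at least `S_k + θ_a Δ_k`, `θ_a = ν (-∞, a]`;
likewise `max (F̂_k - Δ_k) 0` loses `θ_b Δ_k`, `θ_b = ν (b, ∞)`, once `F̂_k(b) ≥ Δ_k`. So the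
risk is bracketed as soon as `m - θ_a Δ_k ≤ S_k ≤ m + θ_b Δ_k`; as both bands move `S_k` by at
most `Δ_k → 0`, the width is then small as well.

Instead of the DKW inequality, the argument is asymptotic in `k`. By the strong law,
`F̂_k(a) → F(a) < 1` and `F̂_k(b) → F(b) > 0`. A Chernoff bound with the sharp variance constant
shows that `S_k` falls below `m - θ Δ_k` (or rises above `m + θ Δ_k`) with probability at most
`(δ/2)^β` for every `β < θ² / (4 Var Y)`. Since `0 < Y ≤ 1` forces `Var Y < 1/4`, one of the
thresholds can be taken with `θ² > 4 Var Y`, and the other just below `2 √(Var Y)`, so that the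
two tails add up to less than `δ`. If `Var Y = 0`, then `S_k = m` almost surely.
-/

open Filter Topology Set

instance (r : ℝ) : NullSingletonClass (expMeasure r) := by
  unfold expMeasure gammaMeasure; infer_instance

section ExpMeasure

variable {γ : ℝ}

lemma integral_expMeasure (hγ : 0 < γ) (G : ℝ → ℝ) :
    ∫ x, G x ∂expMeasure γ = γ * ∫ x in Ioi 0, Real.exp (-γ * x) * G x := by
  have hpdf : Measurable (gammaPDF 1 γ) := (measurable_exponentialPDFReal γ).ennreal_ofReal
  rw [expMeasure, gammaMeasure, ← integral_Ici_eq_integral_Ioi, ← integral_const_mul,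
    integral_withDensity_eq_integral_toReal_smul hpdf
      (ae_of_all _ fun _ => ENNReal.ofReal_lt_top) G,
    ← integral_indicator measurableSet_Ici]
  congr 1 with x
  change (exponentialPDF γ x).toReal * G x = _
  rw [exponentialPDF_eq]
  by_cases hx : 0 ≤ x
  · simp [hx, (mul_pos hγ (Real.exp_pos _)).le, mul_assoc]
  · simp [hx]

lemma entropicRiskOfCdf_eq_expMeasure (hγ : 0 < γ) (G : ℝ → ℝ) :
    entropicRiskOfCdf γ G = -(1 / γ) * Real.log (∫ x, G x ∂expMeasure γ) := by
  rw [entropicRiskOfCdf, integral_expMeasure hγ]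

lemma expMeasure_real_Iic (hγ : 0 < γ) {c : ℝ} (hc : 0 ≤ c) :
    (expMeasure γ).real (Iic c) = 1 - Real.exp (-γ * c) := by
  have := isProbabilityMeasure_expMeasure hγ
  rw [← cdf_eq_real, cdf_expMeasure_eq hγ, if_pos hc, neg_mul]

lemma expMeasure_real_Ioi (hγ : 0 < γ) (c : ℝ) :
    (expMeasure γ).real (Ioi c) = Real.exp (-γ * max c 0) := by
  have := isProbabilityMeasure_expMeasure hγ
  rw [← compl_Iic, measureReal_compl measurableSet_Iic, probReal_univ, ← cdf_eq_real,
    cdf_expMeasure_eq hγ]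
  split_ifs with hc
  · rw [max_eq_left hc, neg_mul]; ring
  · rw [max_eq_right (not_le.mp hc).le]; simp

lemma expMeasure_real_Ici (hγ : 0 < γ) (c : ℝ) :
    (expMeasure γ).real (Ici c) = Real.exp (-γ * max c 0) := by
  rw [← expMeasure_real_Ioi hγ, measureReal_congr Ioi_ae_eq_Ici.symm]

lemma exp_neg_mul_max_mem_Ioc (hγ : 0 ≤ γ) (x : ℝ) : Real.exp (-γ * max x 0) ∈ Ioc 0 1 :=
  ⟨Real.exp_pos _, Real.exp_le_one_iff.mpr (by nlinarith [le_max_right x 0])⟩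

lemma exists_exp_neg_mul_eq (hγ : 0 < γ) {u : ℝ} (hu0 : 0 < u) (hu1 : u ≤ 1) :
    ∃ c, 0 ≤ c ∧ Real.exp (-γ * c) = u :=
  ⟨-Real.log u / γ, div_nonneg (neg_nonneg.mpr (Real.log_nonpos hu0.le hu1)) hγ.le, by
    rw [show -γ * (-Real.log u / γ) = Real.log u by field_simp, Real.exp_log hu0]⟩

end ExpMeasure

lemma entropicRisk_eq_of_nonneg {Ω : Type*} [MeasurableSpace Ω] {μ : Measure Ω} {X : Ω → ℝ}
    (hX0 : 0 ≤ᵐ[μ] X) (γ : ℝ) :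
    entropicRisk μ γ X = -(1 / γ) * Real.log (μ[fun ω => Real.exp (-γ * max (X ω) 0)]) := by
  rw [entropicRisk]
  congr 2
  refine integral_congr_ae (hX0.mono fun ω hω => ?_)
  simp only [max_eq_left (show 0 ≤ X ω from hω)]

section Bands

variable {ν : Measure ℝ} [IsProbabilityMeasure ν] {G : ℝ → ℝ} {Δ : ℝ} {s : Set ℝ}

lemma integrable_min_add_one (hG : Measurable G) (hG01 : ∀ x, G x ∈ Icc 0 1) (hΔ : 0 ≤ Δ) :
    Integrable (fun x => min (G x + Δ) 1) ν :=
  .of_mem_Icc 0 1 ((hG.add_const Δ).min measurable_const).aemeasurable <| ae_of_all _ fun x =>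
    ⟨le_min (by linarith [(hG01 x).1]) zero_le_one, min_le_right _ _⟩

lemma integrable_max_sub_zero (hG : Measurable G) (hG01 : ∀ x, G x ∈ Icc 0 1) (hΔ : 0 ≤ Δ) :
    Integrable (fun x => max (G x - Δ) 0) ν :=
  .of_mem_Icc 0 1 ((hG.sub_const Δ).max measurable_const).aemeasurable <| ae_of_all _ fun x =>
    ⟨le_max_right _ _, max_le (by linarith [(hG01 x).2]) zero_le_one⟩

lemma integral_min_add_one_le (hG : Measurable G) (hG01 : ∀ x, G x ∈ Icc 0 1) (hΔ : 0 ≤ Δ) :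
    ∫ x, min (G x + Δ) 1 ∂ν ≤ ∫ x, G x ∂ν + Δ := by
  have hGi : Integrable G ν := .of_mem_Icc 0 1 hG.aemeasurable (ae_of_all _ hG01)
  calc ∫ x, min (G x + Δ) 1 ∂ν ≤ ∫ x, (G x + Δ) ∂ν :=
        integral_mono (integrable_min_add_one hG hG01 hΔ) (hGi.add (integrable_const Δ))
          fun x => min_le_left _ _
    _ = ∫ x, G x ∂ν + Δ := by simp [integral_add hGi (integrable_const Δ)]

lemma integral_add_mul_le_integral_min_add_one (hG : Measurable G)
    (hG01 : ∀ x, G x ∈ Icc 0 1) (hΔ : 0 ≤ Δ) (hs : MeasurableSet s)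
    (hsG : ∀ x ∈ s, G x + Δ ≤ 1) :
    ∫ x, G x ∂ν + Δ * ν.real s ≤ ∫ x, min (G x + Δ) 1 ∂ν := by
  have hGi : Integrable G ν := .of_mem_Icc 0 1 hG.aemeasurable (ae_of_all _ hG01)
  have hind : Integrable (s.indicator 1) ν := (integrable_const (1 : ℝ)).indicator hs
  calc ∫ x, G x ∂ν + Δ * ν.real s = ∫ x, (G x + Δ * s.indicator 1 x) ∂ν := by
        rw [integral_add hGi (hind.const_mul Δ), integral_const_mul, integral_indicator_one hs]
    _ ≤ ∫ x, min (G x + Δ) 1 ∂ν := by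
        refine integral_mono (hGi.add (hind.const_mul Δ)) (integrable_min_add_one hG hG01 hΔ)
          fun x => ?_
        by_cases hx : x ∈ s
        · simpa [hx] using hsG x hx
        · simpa [hx] using ⟨hΔ, (hG01 x).2⟩

lemma integral_sub_le_integral_max_sub_zero (hG : Measurable G) (hG01 : ∀ x, G x ∈ Icc 0 1)
    (hΔ : 0 ≤ Δ) : ∫ x, G x ∂ν - Δ ≤ ∫ x, max (G x - Δ) 0 ∂ν := by
  have hGi : Integrable G ν := .of_mem_Icc 0 1 hG.aemeasurable (ae_of_all _ hG01)
  calc ∫ x, G x ∂ν - Δ = ∫ x, (G x - Δ) ∂ν := by simp [integral_sub hGi (integrable_const Δ)]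
    _ ≤ ∫ x, max (G x - Δ) 0 ∂ν :=
        integral_mono (hGi.sub (integrable_const Δ)) (integrable_max_sub_zero hG hG01 hΔ)
          fun x => le_max_left _ _

lemma integral_max_sub_zero_le_integral_sub_mul (hG : Measurable G)
    (hG01 : ∀ x, G x ∈ Icc 0 1) (hΔ : 0 ≤ Δ) (hs : MeasurableSet s) (hsG : ∀ x ∈ s, Δ ≤ G x) :
    ∫ x, max (G x - Δ) 0 ∂ν ≤ ∫ x, G x ∂ν - Δ * ν.real s := by
  have hGi : Integrable G ν := .of_mem_Icc 0 1 hG.aemeasurable (ae_of_all _ hG01)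
  have hind : Integrable (s.indicator 1) ν := (integrable_const (1 : ℝ)).indicator hs
  calc ∫ x, max (G x - Δ) 0 ∂ν ≤ ∫ x, (G x - Δ * s.indicator 1 x) ∂ν := by
        refine integral_mono (integrable_max_sub_zero hG hG01 hΔ) (hGi.sub (hind.const_mul Δ))
          fun x => ?_
        by_cases hx : x ∈ s
        · simpa [hx] using hsG x hx
        · simpa [hx] using ⟨by linarith, (hG01 x).1⟩
    _ = ∫ x, G x ∂ν - Δ * ν.real s := by
        rw [integral_sub hGi (hind.const_mul Δ), integral_const_mul, integral_indicator_one hs]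

end Bands

section Bracket

lemma log_bracket {γ ε m lo up Δ : ℝ} (hγ : 0 < γ) (hm : 0 < m) (hlo : m ≤ lo) (hup : up ≤ m)
    (hlo' : lo ≤ m + 2 * Δ) (hup' : m - 2 * Δ ≤ up)
    (hwidth : m + 2 * Δ < Real.exp (γ * ε) * (m - 2 * Δ)) :
    -(1 / γ) * Real.log lo ≤ -(1 / γ) * Real.log m ∧
      -(1 / γ) * Real.log m ≤ -(1 / γ) * Real.log up ∧
      -(1 / γ) * Real.log up - -(1 / γ) * Real.log lo ≤ ε := by
  have hup0 : 0 < up := by nlinarith [Real.exp_pos (γ * ε)]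
  have hlog : Real.log lo ≤ γ * ε + Real.log up := by
    rw [← Real.log_exp (γ * ε), ← Real.log_mul (Real.exp_pos _).ne' hup0.ne']
    exact Real.log_le_log (hm.trans_le hlo) (by nlinarith [Real.exp_pos (γ * ε)])
  have hlog_lo := Real.log_le_log hm hlo
  have hlog_up := Real.log_le_log hup0 hup
  have hγ' : 0 < 1 / γ := one_div_pos.mpr hγ
  refine ⟨by nlinarith, by nlinarith, ?_⟩
  have : 1 / γ * (γ * ε) = ε := by field_simp
  nlinarith

def IsEntropicBracket (γ ε r : ℝ) (G : ℝ → ℝ) (Δ : ℝ) : Prop :=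
  entropicRiskOfCdf γ (fun x => min (G x + Δ) 1) ≤ r ∧
    r ≤ entropicRiskOfCdf γ (fun x => max (G x - Δ) 0) ∧
    entropicRiskOfCdf γ (fun x => max (G x - Δ) 0) -
      entropicRiskOfCdf γ (fun x => min (G x + Δ) 1) ≤ ε

variable {γ ε m Δ : ℝ} {G : ℝ → ℝ}

lemma isEntropicBracket_of_integral {s t : Set ℝ} (hγ : 0 < γ) (hG : Measurable G)
    (hG01 : ∀ x, G x ∈ Icc 0 1) (hm : 0 < m) (hΔ : 0 ≤ Δ)
    (hs : MeasurableSet s) (ht : MeasurableSet t)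
    (hsG : ∀ x ∈ s, G x + Δ ≤ 1) (htG : ∀ x ∈ t, Δ ≤ G x)
    (hlo : m ≤ ∫ x, G x ∂expMeasure γ + Δ * (expMeasure γ).real s)
    (hup : ∫ x, G x ∂expMeasure γ - Δ * (expMeasure γ).real t ≤ m)
    (hmean : |∫ x, G x ∂expMeasure γ - m| ≤ Δ)
    (hwidth : m + 2 * Δ < Real.exp (γ * ε) * (m - 2 * Δ)) :
    IsEntropicBracket γ ε (-(1 / γ) * Real.log m) G Δ := by
  have := isProbabilityMeasure_expMeasure hγ
  rw [IsEntropicBracket, entropicRiskOfCdf_eq_expMeasure hγ, entropicRiskOfCdf_eq_expMeasure hγ]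
  have hmean' := abs_le.mp hmean
  exact log_bracket hγ hm
    (hlo.trans (integral_add_mul_le_integral_min_add_one hG hG01 hΔ hs hsG))
    ((integral_max_sub_zero_le_integral_sub_mul hG hG01 hΔ ht htG).trans hup)
    (by linarith [integral_min_add_one_le (ν := expMeasure γ) hG hG01 hΔ])
    (by linarith [integral_sub_le_integral_max_sub_zero (ν := expMeasure γ) hG hG01 hΔ])
    hwidth

lemma isEntropicBracket_of_monotone {a b : ℝ} (hγ : 0 < γ) (hG : Monotone G)
    (hG01 : ∀ x, G x ∈ Icc 0 1) (hm : 0 < m) (hΔ : 0 ≤ Δ) (ha : G a + Δ ≤ 1) (hb : Δ ≤ G b)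
    (hlo : m - (expMeasure γ).real (Iic a) * Δ ≤ ∫ x, G x ∂expMeasure γ)
    (hup : ∫ x, G x ∂expMeasure γ ≤ m + (expMeasure γ).real (Ioi b) * Δ)
    (hwidth : m + 2 * Δ < Real.exp (γ * ε) * (m - 2 * Δ)) :
    IsEntropicBracket γ ε (-(1 / γ) * Real.log m) G Δ := by
  have := isProbabilityMeasure_expMeasure hγ
  have hIic : (expMeasure γ).real (Iic a) ≤ 1 := measureReal_le_one
  have hIoi : (expMeasure γ).real (Ioi b) ≤ 1 := measureReal_le_one
  refine isEntropicBracket_of_integral hγ hG.measurable hG01 hm hΔ measurableSet_Iic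
    measurableSet_Ioi (fun x hx => by linarith [hG (show x ≤ a from hx)])
    (fun x hx => hb.trans (hG (le_of_lt hx))) (by linarith) (by linarith)
    (abs_le.mpr ⟨by nlinarith, by nlinarith⟩) hwidth

end Bracket

section EmpiricalCdf

variable {Ω : Type*} (Xs : ℕ → Ω → ℝ) (k : ℕ) (ω : Ω)

lemma empiricalCdf_eq_sum_indicator (x : ℝ) :
    empiricalCdf Xs k ω x = (∑ i ∈ Finset.range k, (Ici (Xs i ω)).indicator 1 x) / k := by
  rw [empiricalCdf, Finset.card_filter]
  push_cast
  simp [indicator_apply]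

lemma empiricalCdf_eq_sum_indicator_comp (x : ℝ) :
    empiricalCdf Xs k ω x = (∑ i ∈ Finset.range k, (Iic x).indicator 1 (Xs i ω)) / k := by
  simp [empiricalCdf_eq_sum_indicator, indicator_apply]

lemma empiricalCdf_mem_Icc (x : ℝ) : empiricalCdf Xs k ω x ∈ Icc 0 1 := by
  refine ⟨by unfold empiricalCdf; positivity, div_le_one_of_le₀ ?_ k.cast_nonneg⟩
  exact_mod_cast (Finset.card_filter_le _ _).trans (Finset.card_range k).le

lemma monotone_empiricalCdf : Monotone (empiricalCdf Xs k ω) := fun x y hxy => by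
  unfold empiricalCdf
  gcongr

lemma integral_empiricalCdf_expMeasure {γ : ℝ} (hγ : 0 < γ) :
    ∫ x, empiricalCdf Xs k ω x ∂expMeasure γ
      = (∑ i ∈ Finset.range k, Real.exp (-γ * max (Xs i ω) 0)) / k := by
  have := isProbabilityMeasure_expMeasure hγ
  simp_rw [empiricalCdf_eq_sum_indicator, integral_div]
  rw [integral_finsetSum _ fun i _ => (integrable_const 1).indicator measurableSet_Ici]
  simp_rw [integral_indicator_one measurableSet_Ici, expMeasure_real_Ici hγ]

end EmpiricalCdf

section DKWDelta

lemma dkwDelta_nonneg (δ : ℝ) (k : ℕ) : 0 ≤ dkwDelta δ k := Real.sqrt_nonneg _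

lemma natCast_mul_dkwDelta_sq {δ : ℝ} (hδ0 : 0 < δ) (hδ2 : δ ≤ 2) {k : ℕ} (hk : k ≠ 0) :
    k * dkwDelta δ k ^ 2 = Real.log (2 / δ) / 2 := by
  have hL : 0 ≤ Real.log (2 / δ) := Real.log_nonneg ((one_le_div hδ0).mpr hδ2)
  rw [dkwDelta, Real.sq_sqrt (by positivity)]
  field_simp

lemma tendsto_dkwDelta (δ : ℝ) : Tendsto (dkwDelta δ) atTop (𝓝 0) := by
  have h : Tendsto (fun k : ℕ => Real.log (2 / δ) / (2 * k)) atTop (𝓝 0) :=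
    tendsto_const_nhds.div_atTop (tendsto_natCast_atTop_atTop.const_mul_atTop two_pos)
  rw [← Real.sqrt_zero]
  exact (Real.continuous_sqrt.tendsto 0).comp h

lemma eventually_add_two_mul_dkwDelta_lt {γ ε m δ : ℝ} (hγ : 0 < γ) (hε : 0 < ε) (hm : 0 < m) :
    ∀ᶠ k : ℕ in atTop, m + 2 * dkwDelta δ k < Real.exp (γ * ε) * (m - 2 * dkwDelta δ k) := by
  have hlim : Tendsto (fun k => Real.exp (γ * ε) * (m - 2 * dkwDelta δ k) - (m + 2 * dkwDelta δ k))
      atTop (𝓝 (Real.exp (γ * ε) * m - m)) := by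
    simpa using ((tendsto_dkwDelta δ).const_mul 2 |>.const_sub m |>.const_mul _).sub
      ((tendsto_dkwDelta δ).const_mul 2 |>.const_add m)
  have hpos : 0 < Real.exp (γ * ε) * m - m := by
    nlinarith [Real.one_lt_exp_iff.mpr (mul_pos hγ hε)]
  filter_upwards [hlim.eventually_const_lt hpos] with k hk
  linarith

end DKWDelta

section Chernoff

variable {Ω : Type*} [MeasurableSpace Ω] {μ : Measure Ω} [IsProbabilityMeasure μ]

lemma exp_le_one_add_add_sq_mul {x : ℝ} (hx : |x| ≤ 1) :
    Real.exp x ≤ 1 + x + x ^ 2 * (1 / 2 + |x|) := by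
  have h := (abs_le.mp (Real.exp_bound hx (n := 3) (by norm_num))).2
  have hx3 : |x| ^ 3 = x ^ 2 * |x| := by rw [pow_succ, sq_abs]
  simp only [Finset.sum_range_succ, Finset.sum_range_zero] at h
  norm_num [hx3] at h
  nlinarith [sq_nonneg x, abs_nonneg x]

lemma mgf_le_exp_sq_mul {ξ : Ω → ℝ} (hξ : Measurable ξ) (hbd : ∀ ω, |ξ ω| ≤ 1)
    (hmean : ∫ ω, ξ ω ∂μ = 0) {v : ℝ} (hvar : ∫ ω, ξ ω ^ 2 ∂μ ≤ v) {t : ℝ} (ht : |t| ≤ 1) :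
    mgf ξ μ t ≤ Real.exp (t ^ 2 * v * (1 / 2 + |t|)) := by
  have hξi : Integrable ξ μ :=
    .of_mem_Icc (-1) 1 hξ.aemeasurable (ae_of_all _ fun ω => abs_le.mp (hbd ω))
  have hξ2 : Integrable (fun ω => ξ ω ^ 2) μ :=
    .of_mem_Icc 0 1 (hξ.pow_const 2).aemeasurable (ae_of_all _ fun ω =>
      ⟨sq_nonneg _, by nlinarith [abs_le.mp (hbd ω), sq_abs (ξ ω)]⟩)
  have hpt : ∀ ω, Real.exp (t * ξ ω) ≤ 1 + t * ξ ω + t ^ 2 * (1 / 2 + |t|) * ξ ω ^ 2 := by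
    intro ω
    have htξ : |t * ξ ω| ≤ |t| := by
      rw [abs_mul]; exact mul_le_of_le_one_right (abs_nonneg t) (hbd ω)
    refine (exp_le_one_add_add_sq_mul (htξ.trans ht)).trans ?_
    have : (t * ξ ω) ^ 2 * |t * ξ ω| ≤ (t * ξ ω) ^ 2 * |t| :=
      mul_le_mul_of_nonneg_left htξ (sq_nonneg _)
    nlinarith
  have hint : Integrable (fun ω => 1 + t * ξ ω + t ^ 2 * (1 / 2 + |t|) * ξ ω ^ 2) μ :=
    ((integrable_const 1).add (hξi.const_mul t)).add (hξ2.const_mul _)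
  calc mgf ξ μ t ≤ ∫ ω, (1 + t * ξ ω + t ^ 2 * (1 / 2 + |t|) * ξ ω ^ 2) ∂μ :=
        integral_mono (hint.mono' (by fun_prop) (ae_of_all _ fun ω => by
          rw [Real.norm_eq_abs, abs_of_pos (Real.exp_pos _)]; exact hpt ω)) hint hpt
    _ = 1 + t ^ 2 * (1 / 2 + |t|) * ∫ ω, ξ ω ^ 2 ∂μ := by
        rw [integral_add (f := fun ω => 1 + t * ξ ω) ((integrable_const 1).add (hξi.const_mul t))
          (hξ2.const_mul _), integral_add (integrable_const 1) (hξi.const_mul t),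
          integral_const_mul, integral_const_mul, hmean]
        simp
    _ ≤ 1 + t ^ 2 * v * (1 / 2 + |t|) := by
        nlinarith [mul_le_mul_of_nonneg_left hvar
          (by positivity : (0 : ℝ) ≤ t ^ 2 * (1 / 2 + |t|))]
    _ ≤ Real.exp (t ^ 2 * v * (1 / 2 + |t|)) := by
        linarith [Real.add_one_le_exp (t ^ 2 * v * (1 / 2 + |t|))]

variable {ξ : ℕ → Ω → ℝ} {v : ℝ}

lemma measureReal_sum_le_neg_le (hξ : ∀ i, Measurable (ξ i)) (hind : iIndepFun ξ μ)
    (hbd : ∀ i ω, |ξ i ω| ≤ 1) (hmean : ∀ i, ∫ ω, ξ i ω ∂μ = 0)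
    (hvar : ∀ i, ∫ ω, ξ i ω ^ 2 ∂μ ≤ v) (k : ℕ) (s : ℝ) {t : ℝ} (ht0 : 0 ≤ t) (ht1 : t ≤ 1) :
    μ.real {ω | ∑ i ∈ Finset.range k, ξ i ω ≤ -s}
      ≤ Real.exp (-(t * s) + k * (t ^ 2 * v * (1 / 2 + t))) := by
  have hint : Integrable (fun ω => Real.exp (-t * (∑ i ∈ Finset.range k, ξ i) ω)) μ :=
    hind.integrable_exp_mul_sum hξ fun i _ => integrable_exp_mul_of_mem_Icc (hξ i).aemeasurable
      (ae_of_all _ fun ω => abs_le.mp (hbd i ω))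
  have hmgf : ∀ i ∈ Finset.range k, mgf (ξ i) μ (-t) ≤ Real.exp (t ^ 2 * v * (1 / 2 + t)) :=
    fun i _ => by
      simpa [abs_of_nonneg ht0] using mgf_le_exp_sq_mul (hξ i) (hbd i) (hmean i) (hvar i)
        (t := -t) (by rwa [abs_neg, abs_of_nonneg ht0])
  calc μ.real {ω | ∑ i ∈ Finset.range k, ξ i ω ≤ -s}
      ≤ Real.exp (-(-t) * -s) * mgf (∑ i ∈ Finset.range k, ξ i) μ (-t) := by
        simpa [Finset.sum_apply] using measure_le_le_exp_mul_mgf (-s) (neg_nonpos.mpr ht0) hint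
    _ ≤ Real.exp (-(-t) * -s) * ∏ _i ∈ Finset.range k, Real.exp (t ^ 2 * v * (1 / 2 + t)) := by
        rw [hind.mgf_sum hξ]
        gcongr with i hi
        · exact fun i _ => mgf_nonneg
        · exact hmgf i hi
    _ = Real.exp (-(t * s) + k * (t ^ 2 * v * (1 / 2 + t))) := by
        rw [Finset.prod_const, Finset.card_range, ← Real.exp_nat_mul, ← Real.exp_add]
        ring_nf

lemma eventually_measureReal_sum_le_neg_dkwDelta (hξ : ∀ i, Measurable (ξ i))
    (hind : iIndepFun ξ μ) (hbd : ∀ i ω, |ξ i ω| ≤ 1) (hmean : ∀ i, ∫ ω, ξ i ω ∂μ = 0)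
    (hvar : ∀ i, ∫ ω, ξ i ω ^ 2 ∂μ ≤ v) {δ θ β : ℝ} (hδ0 : 0 < δ) (hδ2 : δ ≤ 2) (hθ : 0 < θ)
    (hβ : 0 ≤ β) (hβθ : 4 * β * v < θ ^ 2) :
    ∀ᶠ k : ℕ in atTop, μ.real {ω | ∑ i ∈ Finset.range k, ξ i ω ≤ -(k * (θ * dkwDelta δ k))}
      ≤ Real.exp (-β * Real.log (2 / δ)) := by
  set L := Real.log (2 / δ)
  have hL : 0 ≤ L := Real.log_nonneg ((one_le_div hδ0).mpr hδ2)
  -- Chernoff parameter `t = 4 β Δ_k / θ`: the exponent is `-β L`, up to the correction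
  -- `4 β v (1 + 2 t) - θ²`, which is negative once `t` is small
  have ht : Tendsto (fun k => 4 * β * dkwDelta δ k / θ) atTop (𝓝 0) := by
    simpa using ((tendsto_dkwDelta δ).const_mul (4 * β)).div_const θ
  have hrate : Tendsto (fun k => 4 * β * v * (1 + 2 * (4 * β * dkwDelta δ k / θ))) atTop
      (𝓝 (4 * β * v)) := by
    simpa using ((ht.const_mul 2).const_add 1).const_mul (4 * β * v)
  filter_upwards [ht.eventually_le_const zero_lt_one, hrate.eventually_lt_const hβθ,
    eventually_ne_atTop 0] with k ht1 hθ' hk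
  set Δ := dkwDelta δ k
  set t := 4 * β * Δ / θ
  have hkΔ : (k : ℝ) * Δ ^ 2 = L / 2 := natCast_mul_dkwDelta_sq hδ0 hδ2 hk
  have ht0 : 0 ≤ t := div_nonneg (by have := dkwDelta_nonneg δ k; positivity) hθ.le
  refine (measureReal_sum_le_neg_le hξ hind hbd hmean hvar k _ ht0 ht1).trans ?_
  gcongr
  have hexp : -(t * (k * (θ * Δ))) + k * (t ^ 2 * v * (1 / 2 + t))
      = -β * L + β * L * (4 * β * v * (1 + 2 * t) - θ ^ 2) / θ ^ 2 := by
    rw [show L = 2 * (k * Δ ^ 2) by linarith]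
    simp only [t]
    field_simp
    ring
  have : β * L * (4 * β * v * (1 + 2 * t) - θ ^ 2) / θ ^ 2 ≤ 0 :=
    div_nonpos_of_nonpos_of_nonneg
      (mul_nonpos_of_nonneg_of_nonpos (by positivity) (by linarith)) (by positivity)
  linarith

end Chernoff

section IID

variable {Ω : Type*} [MeasurableSpace Ω] {μ : Measure Ω} [IsProbabilityMeasure μ]
  {X : Ω → ℝ} {Xs : ℕ → Ω → ℝ}

lemma eventually_measureReal_sum_sub_integral_le (hXs : ∀ i, Measurable (Xs i))
    (hindep : iIndepFun Xs μ) (hid : ∀ i, IdentDistrib (Xs i) X μ μ) {f : ℝ → ℝ}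
    (hf : Measurable f) (hf01 : ∀ x, f x ∈ Icc 0 1) {δ θ β : ℝ} (hδ0 : 0 < δ) (hδ2 : δ ≤ 2)
    (hθ : 0 < θ) (hβ : 0 ≤ β) (hβθ : 4 * β * Var[fun ω => f (X ω); μ] < θ ^ 2) :
    ∀ᶠ k : ℕ in atTop, μ.real {ω | ∑ i ∈ Finset.range k, (f (Xs i ω) - μ[fun ω => f (X ω)])
      ≤ -(k * (θ * dkwDelta δ k))} ≤ Real.exp (-β * Real.log (2 / δ)) := by
  set m := μ[fun ω => f (X ω)]
  have hfX' : AEMeasurable (fun ω => f (X ω)) μ := hf.comp_aemeasurable (hid 0).aemeasurable_snd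
  have hfX : Integrable (fun ω => f (X ω)) μ := .of_mem_Icc 0 1 hfX' (ae_of_all _ fun _ => hf01 _)
  have hm0 : 0 ≤ m := integral_nonneg fun ω => (hf01 _).1
  have hm1 : m ≤ 1 := by
    simpa using integral_mono hfX (integrable_const 1) fun ω => (hf01 (X ω)).2
  refine eventually_measureReal_sum_le_neg_dkwDelta (ξ := fun i ω => f (Xs i ω) - m)
    (fun i => (hf.comp (hXs i)).sub_const m)
    (hindep.comp (fun _ x => f x - m) fun _ => hf.sub_const m)
    (fun i ω => abs_le.mpr ⟨by linarith [(hf01 (Xs i ω)).1], by linarith [(hf01 (Xs i ω)).2]⟩)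
    (fun i => ?_) (fun i => ?_) hδ0 hδ2 hθ hβ hβθ
  · have hYi : IdentDistrib (fun ω => f (Xs i ω)) (fun ω => f (X ω)) μ μ := (hid i).comp hf
    rw [integral_sub (hYi.integrable_iff.mpr hfX) (integrable_const m)]
    simpa [m] using sub_eq_zero.mpr hYi.integral_eq
  · rw [variance_eq_integral hfX']
    exact (((hid i).comp ((hf.sub_const m).pow_const 2)).integral_eq).le

lemma ae_tendsto_empiricalCdf (hXs : ∀ i, Measurable (Xs i))
    (hindep : Pairwise fun i j => IndepFun (Xs i) (Xs j) μ)
    (hid : ∀ i, IdentDistrib (Xs i) X μ μ) (c : ℝ) :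
    ∀ᵐ ω ∂μ, Tendsto (fun k => empiricalCdf Xs k ω c) atTop (𝓝 (μ.real (X ⁻¹' Iic c))) := by
  have hφ : Measurable ((Iic c).indicator (1 : ℝ → ℝ)) :=
    measurable_one.indicator measurableSet_Iic
  set Z : ℕ → Ω → ℝ := fun i => (Iic c).indicator 1 ∘ Xs i
  have hZ0 : μ[Z 0] = μ.real (X ⁻¹' Iic c) := by
    have : Z 0 = (Xs 0 ⁻¹' Iic c).indicator 1 := by
      ext ω; by_cases h : Xs 0 ω ≤ c <;> simp [Z, h]
    rw [this, integral_indicator_one ((hXs 0) measurableSet_Iic), measureReal_def,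
      measureReal_def, (hid 0).measure_mem_eq measurableSet_Iic]
  have := strong_law_ae_real Z
    (.of_mem_Icc 0 1 (hφ.comp (hXs 0)).aemeasurable (ae_of_all _ fun ω => by
      simp only [Z, Function.comp_apply, indicator_apply]; split_ifs <;> simp))
    (fun i j hij => (hindep hij).comp hφ hφ)
    (fun i => ((hid i).trans (hid 0).symm).comp hφ)
  rw [hZ0] at this
  simpa [empiricalCdf_eq_sum_indicator_comp, Z] using this

lemma tendsto_measure_abs_empiricalCdf_sub_ge (hXs : ∀ i, Measurable (Xs i))
    (hindep : Pairwise fun i j => IndepFun (Xs i) (Xs j) μ)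
    (hid : ∀ i, IdentDistrib (Xs i) X μ μ) (c : ℝ) {η : ℝ} (hη : 0 < η) :
    Tendsto (fun k => μ {ω | η ≤ |empiricalCdf Xs k ω c - μ.real (X ⁻¹' Iic c)|}) atTop
      (𝓝 0) := by
  have hmeas : ∀ k, AEStronglyMeasurable (fun ω => empiricalCdf Xs k ω c) μ := fun k => by
    simp_rw [empiricalCdf_eq_sum_indicator_comp]
    exact (Finset.measurable_sum _ fun i _ =>
      (measurable_one.indicator measurableSet_Iic).comp (hXs i)).div_const _ |>.aestronglyMeasurable
  have := tendstoInMeasure_of_tendsto_ae hmeas (ae_tendsto_empiricalCdf hXs hindep hid c)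
    (ENNReal.ofReal η) (ENNReal.ofReal_pos.mpr hη)
  simpa [edist_dist, Real.dist_eq, ENNReal.ofReal_le_ofReal_iff (abs_nonneg _)] using this

end IID

lemma exists_exponents {L r : ℝ} (hL : 0 < L) (hr : 1 < r) :
    ∃ β₁ β₂ : ℝ, 0 ≤ β₁ ∧ β₁ < r ∧ 0 ≤ β₂ ∧ β₂ < 1 ∧
      Real.exp (-β₁ * L) + Real.exp (-β₂ * L) < 2 * Real.exp (-L) := by
  have hβ₁ : Real.exp (-((1 + r) / 2) * L) < Real.exp (-L) := Real.exp_lt_exp.mpr (by nlinarith)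
  have hcont : Tendsto (fun β : ℝ => Real.exp (-β * L)) (𝓝[<] 1) (𝓝 (Real.exp (-L))) := by
    simpa using ((by fun_prop : Continuous fun β : ℝ => Real.exp (-β * L)).tendsto 1).mono_left
      nhdsWithin_le_nhds
  obtain ⟨β₂, hβ₂, hβ₂01⟩ := ((hcont.eventually_lt_const (by linarith : Real.exp (-L) <
    2 * Real.exp (-L) - Real.exp (-((1 + r) / 2) * L))).and
      (Ioo_mem_nhdsLT zero_lt_one)).exists
  exact ⟨(1 + r) / 2, β₂, by linarith, by linarith, hβ₂01.1.le, hβ₂01.2, by linarith⟩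

section Thresholds

variable {Ω : Type*} [MeasurableSpace Ω] {μ : Measure Ω} [IsProbabilityMeasure μ] {Y : Ω → ℝ}

lemma variance_lt_one_div_four (hY : Measurable Y) (hY01 : ∀ ω, Y ω ∈ Ioc 0 1) :
    Var[Y; μ] < 1 / 4 := by
  by_cases h1 : ∀ᵐ ω ∂μ, Y ω = 1
  · have := variance_le_sq_of_bounded (h1.mono fun ω h => ⟨h.ge, h.le⟩) hY.aemeasurable
    norm_num at this ⊢
    linarith
  have hYi : Integrable Y μ :=
    .of_mem_Icc 0 1 hY.aemeasurable (ae_of_all _ fun ω => Ioc_subset_Icc_self (hY01 ω))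
  have hYw : Integrable (fun ω => Y ω * (1 - Y ω)) μ :=
    .of_mem_Icc 0 1 (hY.mul (measurable_const.sub hY)).aemeasurable (ae_of_all _ fun ω =>
      ⟨mul_nonneg (hY01 ω).1.le (by linarith [(hY01 ω).2]), by nlinarith [sq_nonneg (Y ω - 1 / 2)]⟩)
  -- `Y` is not a.s. `1`, so `E[Y (1 - Y)] > 0`, i.e. `E[Y²] < E[Y]`
  have hw : 0 < ∫ ω, Y ω * (1 - Y ω) ∂μ := by
    rw [integral_pos_iff_support_of_nonneg (fun ω => mul_nonneg (hY01 ω).1.le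
      (by linarith [(hY01 ω).2])) hYw]
    rw [ae_iff] at h1
    convert pos_iff_ne_zero.mpr h1 using 2
    ext ω
    simp [(hY01 ω).1.ne', sub_eq_zero, eq_comm (a := (1 : ℝ))]
  have hsq : ∫ ω, (Y ^ 2) ω ∂μ = μ[Y] - ∫ ω, Y ω * (1 - Y ω) ∂μ := by
    rw [← integral_sub hYi hYw]
    congr 1 with ω
    simp only [Pi.pow_apply]; ring
  rw [variance_eq_sub (memLp_of_bounded (ae_of_all _ fun ω => Ioc_subset_Icc_self (hY01 ω))
    hY.aestronglyMeasurable 2), hsq]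
  nlinarith [sq_nonneg (μ[Y] - 1 / 2)]

lemma measure_lt_pos_of_sq_lt_four_mul_variance (hY : AEMeasurable Y μ) (hY0 : ∀ ω, 0 ≤ Y ω)
    {θ : ℝ} (hθ : θ ^ 2 < 4 * Var[Y; μ]) : 0 < μ {ω | θ < Y ω} := by
  refine pos_iff_ne_zero.mpr fun h0 => ?_
  have hle : ∀ᵐ ω ∂μ, Y ω ∈ Icc 0 θ := by
    filter_upwards [measure_eq_zero_iff_ae_notMem.mp h0] with ω hω
    exact ⟨hY0 ω, not_lt.mp hω⟩
  have := variance_le_sq_of_bounded hle hY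
  nlinarith

lemma exists_sq_gt_four_mul_variance (hY : AEMeasurable Y μ) (hv : Var[Y; μ] < 1 / 4) :
    ∃ θ, 0 < θ ∧ 4 * Var[Y; μ] < θ ^ 2 ∧ (0 < μ {ω | θ < Y ω} ∨ 0 < μ {ω | θ < 1 - Y ω}) := by
  set σ := √(Var[Y; μ])
  have hσ0 : 0 ≤ σ := Real.sqrt_nonneg _
  have hσ2 : σ ^ 2 = Var[Y; μ] := Real.sq_sqrt (variance_nonneg _ _)
  have hσ : σ < 1 / 2 := by nlinarith
  -- `θ` lies strictly between `2σ` and `σ + 1/2`: if both tails beyond `θ` were null, `Y` would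
  -- live in `[1 - θ, θ]`, of length `2θ - 1 < 2σ`, contradicting Popoviciu's inequality
  refine ⟨(6 * σ + 1) / 4, by positivity, by nlinarith, ?_⟩
  by_contra! h
  have hmem : ∀ᵐ ω ∂μ, Y ω ∈ Icc (1 - (6 * σ + 1) / 4) ((6 * σ + 1) / 4) := by
    filter_upwards [measure_eq_zero_iff_ae_notMem.mp (nonpos_iff_eq_zero.mp h.1),
      measure_eq_zero_iff_ae_notMem.mp (nonpos_iff_eq_zero.mp h.2)] with ω h1 h2
    exact ⟨by linarith [not_lt.mp h2], not_lt.mp h1⟩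
  obtain ⟨ω, hω⟩ := hmem.exists
  have := variance_le_sq_of_bounded hmem hY
  nlinarith [hω.1.trans hω.2]

lemma exists_dkw_thresholds (hY : Measurable Y) (hY01 : ∀ ω, Y ω ∈ Ioc 0 1)
    (hv : 0 < Var[Y; μ]) {L : ℝ} (hL : 0 < L) :
    ∃ θa θb βa βb : ℝ, 0 < θa ∧ 0 < μ {ω | θa < 1 - Y ω} ∧ 0 < θb ∧ 0 < μ {ω | θb < Y ω} ∧
      0 ≤ βa ∧ 0 ≤ βb ∧ 4 * βa * Var[Y; μ] < θa ^ 2 ∧ 4 * βb * Var[Y; μ] < θb ^ 2 ∧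
      Real.exp (-βa * L) + Real.exp (-βb * L) < 2 * Real.exp (-L) := by
  set v := Var[Y; μ]
  obtain ⟨θ, hθ0, hθv, hθ⟩ :=
    exists_sq_gt_four_mul_variance hY.aemeasurable (variance_lt_one_div_four (μ := μ) hY hY01)
  obtain ⟨β₁, β₂, hβ₁0, hβ₁, hβ₂0, hβ₂, hsum⟩ :=
    exists_exponents hL ((one_lt_div (by positivity)).mpr hθv)
  have hβ₁θ : 4 * β₁ * v < θ ^ 2 := by
    rw [lt_div_iff₀ (by positivity)] at hβ₁
    linarith
  -- on the other side, any threshold below `2 √v` is available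
  set θ' := √(2 * v * (1 + β₂))
  have hθ'2 : θ' ^ 2 = 2 * v * (1 + β₂) := Real.sq_sqrt (by positivity)
  have hθ'0 : 0 < θ' := Real.sqrt_pos.mpr (by positivity)
  have hθ'v : θ' ^ 2 < 4 * v := by nlinarith
  have hθ'β : 4 * β₂ * v < θ' ^ 2 := by nlinarith
  have hup : 0 < μ {ω | θ' < Y ω} :=
    measure_lt_pos_of_sq_lt_four_mul_variance hY.aemeasurable (fun ω => (hY01 ω).1.le) hθ'v
  have hlo : 0 < μ {ω | θ' < 1 - Y ω} :=
    measure_lt_pos_of_sq_lt_four_mul_variance (Y := fun ω => 1 - Y ω)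
      (measurable_const.sub hY).aemeasurable (fun ω => sub_nonneg.mpr (hY01 ω).2)
      (by rwa [variance_const_sub hY.aestronglyMeasurable])
  rcases hθ with hθup | hθlo
  · exact ⟨θ', θ, β₂, β₁, hθ'0, hlo, hθ0, hθup, hβ₂0, hβ₁0, hθ'β, hβ₁θ, by linarith⟩
  · exact ⟨θ, θ', β₁, β₂, hθ0, hθlo, hθ'0, hup, hβ₁0, hβ₂0, hβ₁θ, hθ'β, hsum⟩

variable {X : Ω → ℝ} {γ θ : ℝ}

lemma exists_measureReal_Iic_lt_one (hγ : 0 < γ) (hX : Measurable X) (hθ : 0 < θ)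
    (h : 0 < μ {ω | θ < 1 - Real.exp (-γ * max (X ω) 0)}) :
    ∃ c, μ.real (X ⁻¹' Iic c) < 1 ∧ (expMeasure γ).real (Iic c) = θ := by
  obtain ⟨ω, hω⟩ := nonempty_of_measure_ne_zero h.ne'
  have hθ1 : θ < 1 := by linarith [Real.exp_pos (-γ * max (X ω) 0), hω.out]
  obtain ⟨c, hc0, hc⟩ := exists_exp_neg_mul_eq hγ (sub_pos.mpr hθ1) (by linarith)
  refine ⟨c, ?_, by rw [expMeasure_real_Iic hγ hc0, hc]; ring⟩
  have hsub : {ω | θ < 1 - Real.exp (-γ * max (X ω) 0)} ⊆ (X ⁻¹' Iic c)ᶜ := fun ω hω => by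
    have : Real.exp (-γ * max (X ω) 0) < Real.exp (-γ * c) := by rw [hc]; linarith [hω.out]
    have : c < max (X ω) 0 := by nlinarith [Real.exp_lt_exp.mp this]
    simpa using (lt_max_iff.mp this).resolve_right (not_lt.mpr hc0)
  have hpos : 0 < μ.real (X ⁻¹' Iic c)ᶜ :=
    ENNReal.toReal_pos (h.trans_le (measure_mono hsub)).ne' (measure_ne_top _ _)
  rw [measureReal_compl (hX measurableSet_Iic), probReal_univ] at hpos
  linarith

lemma exists_measureReal_Iic_pos (hγ : 0 < γ) (hθ : 0 < θ)
    (h : 0 < μ {ω | θ < Real.exp (-γ * max (X ω) 0)}) :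
    ∃ c, 0 < μ.real (X ⁻¹' Iic c) ∧ (expMeasure γ).real (Ioi c) = θ := by
  obtain ⟨ω, hω⟩ := nonempty_of_measure_ne_zero h.ne'
  have hθ1 : θ ≤ 1 := hω.out.le.trans (exp_neg_mul_max_mem_Ioc hγ.le _).2
  obtain ⟨c, hc0, hc⟩ := exists_exp_neg_mul_eq hγ hθ hθ1
  refine ⟨c, ?_, by rw [expMeasure_real_Ioi hγ, max_eq_left hc0, hc]⟩
  have hsub : {ω | θ < Real.exp (-γ * max (X ω) 0)} ⊆ X ⁻¹' Iic c := fun ω hω => by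
    have : Real.exp (-γ * c) < Real.exp (-γ * max (X ω) 0) := by rw [hc]; exact hω.out
    have : max (X ω) 0 < c := by nlinarith [Real.exp_lt_exp.mp this]
    exact (le_max_left _ _).trans this.le
  exact ENNReal.toReal_pos (h.trans_le (measure_mono hsub)).ne' (measure_ne_top _ _)

lemma exists_dkw_parameters {δ : ℝ} (hγ : 0 < γ) (hX : Measurable X)
    (hv : 0 < Var[fun ω => Real.exp (-γ * max (X ω) 0); μ]) (hδ0 : 0 < δ) (hδ2 : δ < 2) :
    ∃ a b βa βb : ℝ, μ.real (X ⁻¹' Iic a) < 1 ∧ 0 < μ.real (X ⁻¹' Iic b) ∧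
      0 < (expMeasure γ).real (Iic a) ∧ 0 < (expMeasure γ).real (Ioi b) ∧ 0 ≤ βa ∧ 0 ≤ βb ∧
      4 * βa * Var[fun ω => Real.exp (-γ * max (X ω) 0); μ] < (expMeasure γ).real (Iic a) ^ 2 ∧
      4 * βb * Var[fun ω => Real.exp (-γ * max (X ω) 0); μ] < (expMeasure γ).real (Ioi b) ^ 2 ∧
      Real.exp (-βa * Real.log (2 / δ)) + Real.exp (-βb * Real.log (2 / δ)) < δ := by
  obtain ⟨θa, θb, βa, βb, hθa, hPa, hθb, hPb, hβa, hβb, hθβa, hθβb, hsum⟩ :=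
    exists_dkw_thresholds (Y := fun ω => Real.exp (-γ * max (X ω) 0)) (by fun_prop)
      (fun ω => exp_neg_mul_max_mem_Ioc hγ.le _) hv
      (Real.log_pos ((one_lt_div hδ0).mpr hδ2))
  obtain ⟨a, hFa, rfl⟩ := exists_measureReal_Iic_lt_one hγ hX hθa hPa
  obtain ⟨b, hFb, rfl⟩ := exists_measureReal_Iic_pos hγ hθb hPb
  refine ⟨a, b, βa, βb, hFa, hFb, hθa, hθb, hβa, hβb, hθβa, hθβb, ?_⟩
  rwa [Real.exp_neg, Real.exp_log (by positivity), inv_div, mul_div_cancel₀ _ two_ne_zero] at hsum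

end Thresholds

section Assembly

variable {Ω : Type*} [MeasurableSpace Ω] {μ : Measure Ω} [IsProbabilityMeasure μ]

lemma ofReal_one_sub_le_measure {s t : Set Ω} {δ : ℝ} (hδ : 0 ≤ δ)
    (hs : μ s ≤ ENNReal.ofReal δ) (hst : sᶜ ⊆ t) : ENNReal.ofReal (1 - δ) ≤ μ t :=
  calc ENNReal.ofReal (1 - δ) = 1 - ENNReal.ofReal δ := by
        rw [ENNReal.ofReal_sub _ hδ, ENNReal.ofReal_one]
    _ ≤ 1 - μ s := tsub_le_tsub_left hs 1
    _ ≤ μ sᶜ := tsub_le_iff_right.mpr <| by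
        simpa [add_comm] using measure_union_le (μ := μ) s sᶜ
    _ ≤ μ t := measure_mono hst

lemma eventually_measure_union_le {A B C D : ℕ → Set Ω} {a b δ : ℝ} (ha : 0 ≤ a) (hb : 0 ≤ b)
    (hab : a + b < δ) (hA : ∀ᶠ k in atTop, μ.real (A k) ≤ a)
    (hB : ∀ᶠ k in atTop, μ.real (B k) ≤ b) (hC : Tendsto (fun k => μ (C k)) atTop (𝓝 0))
    (hD : Tendsto (fun k => μ (D k)) atTop (𝓝 0)) :
    ∀ᶠ k in atTop, μ (A k ∪ B k ∪ (C k ∪ D k)) ≤ ENNReal.ofReal δ := by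
  have hCD : Tendsto (fun k => μ (C k) + μ (D k)) atTop (𝓝 0) := by simpa using hC.add hD
  filter_upwards [hA, hB, hCD.eventually_lt_const (ENNReal.ofReal_pos.mpr (sub_pos.mpr hab))]
    with k hAk hBk hCDk
  calc μ (A k ∪ B k ∪ (C k ∪ D k)) ≤ μ (A k) + μ (B k) + (μ (C k) + μ (D k)) :=
        (measure_union_le _ _).trans (add_le_add (measure_union_le _ _) (measure_union_le _ _))
    _ ≤ ENNReal.ofReal a + ENNReal.ofReal b + ENNReal.ofReal (δ - (a + b)) := by
        gcongr
        · exact (ENNReal.le_ofReal_iff_toReal_le (measure_ne_top _ _) ha).mpr hAk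
        · exact (ENNReal.le_ofReal_iff_toReal_le (measure_ne_top _ _) hb).mpr hBk
    _ = ENNReal.ofReal δ := by
        rw [← ENNReal.ofReal_add ha hb, ← ENNReal.ofReal_add (by positivity) (by linarith)]
        ring_nf

variable {X : Ω → ℝ} {Xs : ℕ → Ω → ℝ} {γ δ ε : ℝ}

lemma integral_exp_neg_mul_max_pos (hX : AEMeasurable X μ) (hγ : 0 ≤ γ) :
    0 < μ[fun ω => Real.exp (-γ * max (X ω) 0)] :=
  integral_exp_pos <| .of_mem_Icc 0 1 (by fun_prop) <|
    ae_of_all _ fun ω => Ioc_subset_Icc_self (exp_neg_mul_max_mem_Ioc hγ _)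

lemma eventually_isEntropicBracket_of_variance_eq_zero (hid : ∀ i, IdentDistrib (Xs i) X μ μ)
    (hγ : 0 < γ) (hδ : 0 ≤ δ) (hε : 0 < ε)
    (hv : Var[fun ω => Real.exp (-γ * max (X ω) 0); μ] = 0) :
    ∀ᶠ k : ℕ in atTop, ENNReal.ofReal (1 - δ) ≤ μ {ω | IsEntropicBracket γ ε
      (-(1 / γ) * Real.log (μ[fun ω => Real.exp (-γ * max (X ω) 0)])) (empiricalCdf Xs k ω)
      (dkwDelta δ k)} := by
  set g : ℝ → ℝ := fun x => Real.exp (-γ * max x 0)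
  have hg : Measurable g := by fun_prop
  set m := μ[fun ω => g (X ω)]
  have hm : 0 < m := integral_exp_neg_mul_max_pos (hid 0).aemeasurable_snd hγ.le
  have hconst : ∀ᵐ ω ∂μ, g (X ω) = m := ae_eq_integral_of_variance_eq_zero
    (memLp_of_bounded (ae_of_all _ fun ω => Ioc_subset_Icc_self (exp_neg_mul_max_mem_Ioc hγ.le _))
      (hg.comp_aemeasurable (hid 0).aemeasurable_snd).aestronglyMeasurable 2) hv
  have hconst_all : ∀ᵐ ω ∂μ, ∀ i, g (Xs i ω) = m := ae_all_iff.mpr fun i =>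
    ((hid i).comp hg).symm.ae_snd (p := fun y => y = m) (measurableSet_singleton m) hconst
  filter_upwards [eventually_add_two_mul_dkwDelta_lt (δ := δ) hγ hε hm, eventually_ne_atTop 0]
    with k hw hk
  refine ofReal_one_sub_le_measure hδ (s := {ω | ¬ ∀ i, g (Xs i ω) = m})
    (by rw [ae_iff.mp hconst_all]; exact zero_le) fun ω hω => ?_
  have hS : ∫ x, empiricalCdf Xs k ω x ∂expMeasure γ = m := by
    have hω : ∀ i, g (Xs i ω) = m := not_not.mp hω
    rw [integral_empiricalCdf_expMeasure Xs k ω hγ, Finset.sum_congr rfl fun i _ => hω i]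
    simp [hk]
  exact isEntropicBracket_of_integral hγ (monotone_empiricalCdf Xs k ω).measurable
    (empiricalCdf_mem_Icc Xs k ω) hm (dkwDelta_nonneg δ k) MeasurableSet.empty
    MeasurableSet.empty (by simp) (by simp) (by simp [hS]) (by simp [hS])
    (by simp [hS, dkwDelta_nonneg]) hw

lemma eventually_isEntropicBracket_of_variance_pos (hX : Measurable X)
    (hXs : ∀ i, Measurable (Xs i)) (hindep : iIndepFun Xs μ)
    (hid : ∀ i, IdentDistrib (Xs i) X μ μ) (hγ : 0 < γ) (hδ0 : 0 < δ) (hδ2 : δ < 2)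
    (hε : 0 < ε) (hv : 0 < Var[fun ω => Real.exp (-γ * max (X ω) 0); μ]) :
    ∀ᶠ k : ℕ in atTop, ENNReal.ofReal (1 - δ) ≤ μ {ω | IsEntropicBracket γ ε
      (-(1 / γ) * Real.log (μ[fun ω => Real.exp (-γ * max (X ω) 0)])) (empiricalCdf Xs k ω)
      (dkwDelta δ k)} := by
  set g : ℝ → ℝ := fun x => Real.exp (-γ * max x 0)
  have hg : Measurable g := by fun_prop
  have hg01 : ∀ x, g x ∈ Icc 0 1 := fun x => Ioc_subset_Icc_self (exp_neg_mul_max_mem_Ioc hγ.le x)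
  set m := μ[fun ω => g (X ω)]
  have hm : 0 < m := integral_exp_neg_mul_max_pos hX.aemeasurable hγ.le
  obtain ⟨a, b, βa, βb, hFa, hFb, hθa, hθb, hβa, hβb, hθβa, hθβb, hsum⟩ :=
    exists_dkw_parameters hγ hX hv hδ0 hδ2
  have hpair : Pairwise fun i j => IndepFun (Xs i) (Xs j) μ := fun i j hij => hindep.indepFun hij
  -- the four bad events: the sample mean of `g (Xs i)` too low or too high, `F̂_k a` too close to
  -- `1`, `F̂_k b` too close to `0`
  have hbad := eventually_measure_union_le (Real.exp_pos _).le (Real.exp_pos _).le hsum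
    (eventually_measureReal_sum_sub_integral_le hXs hindep hid hg hg01 hδ0 hδ2.le hθa hβa hθβa)
    (eventually_measureReal_sum_sub_integral_le hXs hindep hid (f := fun x => 1 - g x)
      (measurable_const.sub hg) (fun x => ⟨by linarith [(hg01 x).2], by linarith [(hg01 x).1]⟩)
      hδ0 hδ2.le hθb hβb
      (by rwa [variance_const_sub (X := fun ω => g (X ω)) (hg.comp hX).aestronglyMeasurable]))
    (tendsto_measure_abs_empiricalCdf_sub_ge hXs hpair hid a (half_pos (sub_pos.mpr hFa)))
    (tendsto_measure_abs_empiricalCdf_sub_ge hXs hpair hid b (half_pos hFb))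
  have hΔ := tendsto_dkwDelta δ
  filter_upwards [hbad, eventually_add_two_mul_dkwDelta_lt (δ := δ) hγ hε hm,
    hΔ.eventually_le_const (half_pos (sub_pos.mpr hFa)), hΔ.eventually_le_const (half_pos hFb),
    eventually_ne_atTop 0] with k hbadk hw hΔa hΔb hk
  refine ofReal_one_sub_le_measure hδ0.le hbadk fun ω hω => ?_
  simp only [compl_union, mem_inter_iff, mem_compl_iff, mem_ofPred_eq, not_le] at hω
  obtain ⟨⟨hlo, hup⟩, hFa', hFb'⟩ := hω
  have hgX : Integrable (fun ω => g (X ω)) μ :=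
    .of_mem_Icc 0 1 (hg.comp hX).aemeasurable (ae_of_all _ fun ω => hg01 _)
  have hm' : ∫ ω, (1 - g (X ω)) ∂μ = 1 - m := by
    rw [integral_sub (integrable_const 1) hgX]; simp [m]
  simp only [Finset.sum_sub_distrib, Finset.sum_const, Finset.card_range, nsmul_eq_mul, hm',
    mul_one] at hlo hup
  have hk' : (0 : ℝ) < k := Nat.cast_pos.mpr (Nat.pos_of_ne_zero hk)
  have hS := integral_empiricalCdf_expMeasure Xs k ω hγ
  refine isEntropicBracket_of_monotone (a := a) (b := b) hγ (monotone_empiricalCdf Xs k ω)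
    (empiricalCdf_mem_Icc Xs k ω) hm (dkwDelta_nonneg δ k) ?_ ?_ ?_ ?_ hw
  · linarith [(abs_lt.mp hFa').2]
  · linarith [(abs_lt.mp hFb').1]
  · rw [hS, le_div_iff₀ hk']
    linarith
  · rw [hS, div_le_iff₀ hk']
    linarith

end Assembly

/-- The DKW method yields effective bounds on entropic risk: for a
nonnegative random variable `X`, `γ > 0`, `δ ∈ (0,1)`, `ε > 0` and i.i.d. copies `Xs` of
`X`, there is a `k₀` such that for all `k ≥ k₀`, with probability at least `1 - δ`,
`E_γ(F̲_k) ≤ ERisk_γ(X) ≤ E_γ(F̄_k)` and `E_γ(F̄_k) - E_γ(F̲_k) ≤ ε`, where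
`F̲_k = min(F̂_k + Δ_k, 1)` and `F̄_k = max(F̂_k - Δ_k, 0)` are the DKW band functions. -/
theorem dkw_effective_bounds_entropicRisk
    {Ω : Type*} [MeasurableSpace Ω] (μ : Measure Ω) [IsProbabilityMeasure μ]
    (X : Ω → ℝ) (hX : Measurable X) (hX0 : 0 ≤ᵐ[μ] X)
    (Xs : ℕ → Ω → ℝ) (hXs : ∀ i, Measurable (Xs i))
    (hindep : iIndepFun Xs μ)
    (hid : ∀ i, IdentDistrib (Xs i) X μ μ)
    (γ δ ε : ℝ) (hγ : 0 < γ) (hδ : δ ∈ Set.Ioo (0 : ℝ) 1) (hε : 0 < ε) :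
    ∃ k₀ : ℕ, ∀ k ≥ k₀,
      ENNReal.ofReal (1 - δ) ≤
        μ {ω | entropicRiskOfCdf γ (fun x => min (empiricalCdf Xs k ω x + dkwDelta δ k) 1)
                 ≤ entropicRisk μ γ X
             ∧ entropicRisk μ γ X
                 ≤ entropicRiskOfCdf γ (fun x => max (empiricalCdf Xs k ω x - dkwDelta δ k) 0)
             ∧ entropicRiskOfCdf γ (fun x => max (empiricalCdf Xs k ω x - dkwDelta δ k) 0)
                 - entropicRiskOfCdf γ (fun x => min (empiricalCdf Xs k ω x + dkwDelta δ k) 1)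
                 ≤ ε} := by
  obtain ⟨hδ0, hδ1⟩ := hδ
  rw [entropicRisk_eq_of_nonneg hX0]
  refine eventually_atTop.mp ?_
  rcases (variance_nonneg (fun ω => Real.exp (-γ * max (X ω) 0)) μ).eq_or_lt with hv | hv
  · exact eventually_isEntropicBracket_of_variance_eq_zero hid hγ hδ0.le hε hv.symm
  · exact eventually_isEntropicBracket_of_variance_pos hX hXs hindep hid hγ hδ0 (by linarith) hε hv
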